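/- arXiv:2111.06485 — 2 statements merged into one kernel-verified Lean document; each statement's English description precedes it below -/
import Mathlib

section
/- Let 0 < a < 1, η, k, d > 0. For all (u1,w1), (u2,w2) ∈ ℝ², with F(u,w) = (−f(u,w), −g(u,w)) where f(u,w) = η[u(u−a)(u−1) + w] and g(u,w) = kw − du, one has (F(u1,w1) − F(u2,w2)) · ((u1,w1) − (u2,w2)) ≤ (((1+a)²/3 − a)η + |η−d|/2)(u1−u2)² − (k − |η−d|/2)(w1−w2)². -/
lemma fhn_amgm (η d x y : ℝ) : (d - η) * (x * y) ≤ |η - d| / 2 * (x ^ 2 + y ^ 2) := by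
  have h1 : d - η ≤ |η - d| := by rw [abs_sub_comm]; exact le_abs_self _
  have h2 : η - d ≤ |η - d| := le_abs_self _
  have h0 : 0 ≤ |η - d| := abs_nonneg _
  rcases le_or_gt 0 (x * y) with h | h
  · nlinarith [mul_nonneg h0 (sq_nonneg (x - y)), mul_le_mul_of_nonneg_right h1 h]
  · nlinarith [mul_nonneg h0 (sq_nonneg (x + y)), mul_le_mul_of_nonneg_right h2 (le_of_lt (neg_pos.mpr h))]

lemma fhn_cubic (a η u1 u2 : ℝ) (hη : 0 < η) :
    -(η * ((u1 * (u1 - a) * (u1 - 1)) - (u2 * (u2 - a) * (u2 - 1))) * (u1 - u2))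
      ≤ ((1 + a) ^ 2 / 3 - a) * η * (u1 - u2) ^ 2 := by
  have key : (a - (1 + a) ^ 2 / 3) * (u1 - u2) ^ 2 ≤
      ((u1 * (u1 - a) * (u1 - 1)) - (u2 * (u2 - a) * (u2 - 1))) * (u1 - u2) := by
    nlinarith [sq_nonneg (u1 + u2 - 2 * (1 + a) / 3), sq_nonneg (u1 - u2)]
  nlinarith [mul_le_mul_of_nonneg_left key (le_of_lt hη)]

theorem fhn_monotonicity (a η k d : ℝ) (ha : 0 < a) (ha1 : a < 1)
    (hη : 0 < η) (hk : 0 < k) (hd : 0 < d)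
    (f g : ℝ → ℝ → ℝ)
    (hf : ∀ u w, f u w = η * (u * (u - a) * (u - 1) + w))
    (hg : ∀ u w, g u w = k * w - d * u) :
    ∀ u1 w1 u2 w2 : ℝ,
      (-(f u1 w1) - (-(f u2 w2))) * (u1 - u2) + (-(g u1 w1) - (-(g u2 w2))) * (w1 - w2) ≤
        (((1 + a)^2 / 3 - a) * η + |η - d| / 2) * (u1 - u2)^2
          - (k - |η - d| / 2) * (w1 - w2)^2 := by
  intro u1 w1 u2 w2
  rw [hf, hf, hg, hg]
  have h1 := fhn_amgm η d (u1 - u2) (w1 - w2)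
  have h2 := fhn_cubic a η u1 u2 hη
  nlinarith [h1, h2]
end

section
/- Let (λ_k) be positive reals and (γ_k) nonnegative reals with ∑_k γ_k λ_k^{1/2} < ∞ and ∑_k γ_k < ∞. If additionally ∑_k (γ_k λ_k)² < ∞, then for all 0 ≤ t1 ≤ t ≤ T, ∑_k γ_k² λ_k² [∫_0^{t1} (e^{−λ_k(t−s)} − e^{−λ_k(t1−s)})² ds + ∫_{t1}^{t} e^{−2λ_k(t−s)} ds] ≤ C (t − t1)^{2γ} for any fixed γ ∈ (0,1/2), where C depends on γ, T and ∑_k γ_k² λ_k² but not on t, t1. -/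
/-!
Write `h = t - t₁` and `x = exp (-λ h)`. Both integrals are elementary: the first equals
`(1 - x)² (1 - exp (-2 λ t₁)) / (2 λ)` and the second `(1 - x²) / (2 λ)`, so together they are
at most `((1 - x)² + 1 - x²) / (2 λ) = (1 - x) / λ ≤ h`. Hence the `k`-th term of the series is
at most `(γₖ λₖ)² h`, and `h ≤ T ^ (1 - 2γ) h ^ (2γ)` because `h ≤ T` and `2γ ≤ 1`.
-/

open Real

lemma integral_exp_neg_mul_sub {c : ℝ} (hc : c ≠ 0) (a b : ℝ) :
    ∫ s in a..b, exp (-c * (b - s)) = (1 - exp (-c * (b - a))) / c := by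
  have hderiv : ∀ s ∈ Set.uIcc a b,
      HasDerivAt (fun x => exp (-c * (b - x)) / c) (exp (-c * (b - s))) s := by
    intro s _
    have hlin : HasDerivAt (fun x : ℝ => -c * (b - x)) c s := by
      simpa using ((hasDerivAt_id s).const_sub b).const_mul (-c)
    simpa [mul_div_assoc, mul_div_cancel_right₀ _ hc] using hlin.exp.div_const c
  rw [intervalIntegral.integral_eq_sub_of_hasDerivAt hderiv
    (by apply Continuous.intervalIntegrable; fun_prop)]
  simp [sub_div]

/-- The variance of the increment between times `t₁ ≤ t` of the Ornstein–Uhlenbeck process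
`∫₀ᵗ exp (-L (t - s)) dW(s)`. -/
noncomputable def ouIncrementVariance (L t₁ t : ℝ) : ℝ :=
  (∫ s in (0:ℝ)..t₁, (exp (-L * (t - s)) - exp (-L * (t₁ - s))) ^ 2) +
    ∫ s in t₁..t, exp (-2 * L * (t - s))

lemma ouIncrementVariance_nonneg (L : ℝ) {t₁ t : ℝ} (ht₁ : 0 ≤ t₁) (h : t₁ ≤ t) :
    0 ≤ ouIncrementVariance L t₁ t :=
  add_nonneg (intervalIntegral.integral_nonneg ht₁ fun _ _ => sq_nonneg _)
    (intervalIntegral.integral_nonneg h fun _ _ => (exp_pos _).le)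

lemma ouIncrementVariance_eq {L : ℝ} (hL : L ≠ 0) (t₁ t : ℝ) :
    ouIncrementVariance L t₁ t =
      (1 - exp (-L * (t - t₁))) ^ 2 * ((1 - exp (-(2 * L) * t₁)) / (2 * L)) +
        (1 - exp (-(2 * L) * (t - t₁))) / (2 * L) := by
  have h2L : 2 * L ≠ 0 := mul_ne_zero two_ne_zero hL
  have hfactor : ∀ s, (exp (-L * (t - s)) - exp (-L * (t₁ - s))) ^ 2 =
      (1 - exp (-L * (t - t₁))) ^ 2 * exp (-(2 * L) * (t₁ - s)) := by
    intro s
    rw [show -(2 * L) * (t₁ - s) = -L * (t₁ - s) + -L * (t₁ - s) by ring,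
      show -L * (t - s) = -L * (t₁ - s) + -L * (t - t₁) by ring, exp_add, exp_add]
    ring
  have hsecond : ∀ s, exp (-2 * L * (t - s)) = exp (-(2 * L) * (t - s)) := fun s => by
    ring_nf
  simp only [ouIncrementVariance, hfactor, hsecond, intervalIntegral.integral_const_mul,
    integral_exp_neg_mul_sub h2L, sub_zero]

lemma ouIncrementVariance_le {L t₁ t : ℝ} (hL : 0 < L) (h : t₁ ≤ t) :
    ouIncrementVariance L t₁ t ≤ t - t₁ := by
  rw [ouIncrementVariance_eq hL.ne']
  set x := exp (-L * (t - t₁))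
  have hx1 : x ≤ 1 := exp_le_one_iff.mpr (by nlinarith)
  have hsq : exp (-(2 * L) * (t - t₁)) = x ^ 2 := by
    rw [← exp_nat_mul]; ring_nf
  have hfactor_le_one : 1 - exp (-(2 * L) * t₁) ≤ 1 := by linarith [exp_pos (-(2 * L) * t₁)]
  have hlin : 1 - x ≤ L * (t - t₁) := by linarith [add_one_le_exp (-L * (t - t₁))]
  calc _ ≤ (1 - x) ^ 2 / (2 * L) + (1 - x ^ 2) / (2 * L) := by
        rw [hsq, mul_div_assoc']
        gcongr
        exact mul_le_of_le_one_right (sq_nonneg _) hfactor_le_one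
    _ = (1 - x) / L := by field_simp; ring
    _ ≤ t - t₁ := by rw [div_le_iff₀ hL]; linarith

lemma le_rpow_mul_rpow_of_le {h T α : ℝ} (h0 : 0 ≤ h) (hT : h ≤ T) (hα : α ≤ 1) :
    h ≤ T ^ (1 - α) * h ^ α := by
  calc h = h ^ (1 - α) * h ^ α := by rw [← rpow_add' h0 (by norm_num), sub_add_cancel, rpow_one]
    _ ≤ T ^ (1 - α) * h ^ α := by gcongr

theorem holder_series_estimate_general (lam γk : ℕ → ℝ)
    (hlam : ∀ k, 0 < lam k)
    (h3 : Summable (fun k => (γk k * lam k)^2))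
    (γ T : ℝ) (hγ : γ ∈ Set.Ioo (0:ℝ) (1/2)) (hT : 0 < T) :
    ∃ C : ℝ, 0 < C ∧ ∀ t1 t : ℝ, 0 ≤ t1 → t1 ≤ t → t ≤ T →
      (∑' k, (γk k)^2 * (lam k)^2 *
        ((∫ s in (0:ℝ)..t1,
            (Real.exp (-(lam k) * (t - s)) - Real.exp (-(lam k) * (t1 - s)))^2) +
         ∫ s in t1..t, Real.exp (-2 * (lam k) * (t - s))))
        ≤ C * (t - t1) ^ (2 * γ) := by
  set S := ∑' k, (γk k * lam k) ^ 2
  have hS : 0 ≤ S := tsum_nonneg fun _ => sq_nonneg _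
  refine ⟨S * T ^ (1 - 2 * γ) + 1, by positivity, fun t1 t ht1 h htT => ?_⟩
  have hterm : ∀ k, (γk k) ^ 2 * (lam k) ^ 2 * ouIncrementVariance (lam k) t1 t ≤
      (γk k * lam k) ^ 2 * (t - t1) := fun k => by
    rw [mul_pow]
    exact mul_le_mul_of_nonneg_left (ouIncrementVariance_le (hlam k) h) (by positivity)
  have hnonneg : ∀ k, 0 ≤ (γk k) ^ 2 * (lam k) ^ 2 * ouIncrementVariance (lam k) t1 t :=
    fun k => mul_nonneg (by positivity) (ouIncrementVariance_nonneg _ ht1 h)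
  have hdominant : Summable fun k => (γk k * lam k) ^ 2 * (t - t1) := h3.mul_right _
  have hpow_nonneg : 0 ≤ (t - t1) ^ (2 * γ) := rpow_nonneg (sub_nonneg.mpr h) _
  calc ∑' k, (γk k) ^ 2 * (lam k) ^ 2 * ouIncrementVariance (lam k) t1 t
      ≤ ∑' k, (γk k * lam k) ^ 2 * (t - t1) :=
        (hdominant.of_nonneg_of_le hnonneg hterm).tsum_le_tsum hterm hdominant
    _ = S * (t - t1) := tsum_mul_right
    _ ≤ S * (T ^ (1 - 2 * γ) * (t - t1) ^ (2 * γ)) :=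
        mul_le_mul_of_nonneg_left (le_rpow_mul_rpow_of_le (by linarith) (by linarith)
          (by linarith [hγ.2])) hS
    _ ≤ (S * T ^ (1 - 2 * γ) + 1) * (t - t1) ^ (2 * γ) := by nlinarith

theorem holder_series_estimate (lam γk : ℕ → ℝ)
    (hlam : ∀ k, 0 < lam k) (hγk : ∀ k, 0 ≤ γk k)
    (h1 : Summable (fun k => γk k * (lam k) ^ ((1:ℝ)/2)))
    (h2 : Summable γk)
    (h3 : Summable (fun k => (γk k * lam k)^2))
    (γ T : ℝ) (hγ : γ ∈ Set.Ioo (0:ℝ) (1/2)) (hT : 0 < T) :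
    ∃ C : ℝ, 0 < C ∧ ∀ t1 t : ℝ, 0 ≤ t1 → t1 ≤ t → t ≤ T →
      (∑' k, (γk k)^2 * (lam k)^2 *
        ((∫ s in (0:ℝ)..t1,
            (Real.exp (-(lam k) * (t - s)) - Real.exp (-(lam k) * (t1 - s)))^2) +
         ∫ s in t1..t, Real.exp (-2 * (lam k) * (t - s))))
        ≤ C * (t - t1) ^ (2 * γ) :=
  holder_series_estimate_general lam γk hlam h3 γ T hγ hT
end
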